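/- arXiv:2205.13436 — 5 statements merged into one kernel-verified Lean document; each statement's English description precedes it below -/
import Mathlib

section
/- Let A ∈ M_n(ℂ[[u]]), A′ ∈ M_m(ℂ[[u]]), and let F ∈ M_{m×n}(ℂ[[u]]) satisfy u²·(dF/du) = F·A − A′·F (i.e. F defines a morphism of E-structures from (ℂ[[u]]^n, A) to (ℂ[[u]]^m, A′)). Let (E_w) and (E′_w) be the unique eigenvalue decompositions of ℂ[[u]]^n and ℂ[[u]]^m respectively, i.e. the unique families of ℂ[[u]]-submodules that are direct sum decompositions, are invariant under D_A (resp. D_{A′}), and reduce modulo u to the generalized eigenspaces of the residues A_0 (resp. A′_0). Then F·E_w ⊆ E′_w for every w, where E′_w := 0 if w is not an eigenvalue of A′_0. (Morphisms of E-structures respect the eigenvalue decompositions.) -/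
/-!
Morphisms of E-structures respect the eigenvalue (Hukuhara–Levelt–Turrittin)
decompositions: if `F` satisfies `u²·dF/du = F·A − A′·F`, and `(E_w)`, `(E′_w)` are the
eigenvalue decompositions of `(ℂ[[u]]^n, A)` and `(ℂ[[u]]^m, A′)` (with `E_w = 0`,
resp. `E′_w = 0`, when `w` is not an eigenvalue of the corresponding residue), then
`F·E_w ⊆ E′_w` for every `w`.
-/

open PowerSeries Matrix

noncomputable section

/-- Formal derivative of a power series in `ℂ[[u]]`. -/
def psD (f : PowerSeries ℂ) : PowerSeries ℂ :=
  PowerSeries.mk fun k => ((k : ℂ) + 1) * PowerSeries.coeff (k + 1) f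

/-- Entrywise formal derivative of a matrix of power series. -/
def matD {I J : Type*} (M : Matrix I J (PowerSeries ℂ)) : Matrix I J (PowerSeries ℂ) :=
  Matrix.of fun i j => psD (M i j)

/-- The `k`-th coefficient matrix of a matrix of power series. -/
def coeffM {I J : Type*} (k : ℕ) (M : Matrix I J (PowerSeries ℂ)) : Matrix I J ℂ :=
  Matrix.of fun i j => PowerSeries.coeff k (M i j)

/-- Reduction modulo `u` of a vector of power series (constant coefficients). -/
def piConst {n : ℕ} (v : Fin n → PowerSeries ℂ) : Fin n → ℂ :=
  fun i => PowerSeries.constantCoeff (v i)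

/-- The operator `D_A(v) = u² · dv/du + A · v` of the E-structure attached to `A`. -/
def DA {n : ℕ} (A : Matrix (Fin n) (Fin n) (PowerSeries ℂ)) (v : Fin n → PowerSeries ℂ) :
    Fin n → PowerSeries ℂ :=
  fun i => PowerSeries.X ^ 2 * psD (v i) + A.mulVec v i

/-- The eigenvalue decomposition of the E-structure `(ℂ[[u]]^n, D_A)`, written as a
family of `ℂ[[u]]`-submodules indexed by all of `ℂ` and vanishing away from the
eigenvalues of the residue `A_0`:
(o) `E_w = 0` if `w` is not an eigenvalue of `A_0`;
(i) `ℂ[[u]]^n = ⊕_w E_w`;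
(ii) `D_A(E_w) ⊆ E_w`;
(iii) `π(E_w)` is the generalized eigenspace of `A_0` for `w`. -/
def IsEigenDecomp {n : ℕ} (A : Matrix (Fin n) (Fin n) (PowerSeries ℂ))
    (E : ℂ → Submodule (PowerSeries ℂ) (Fin n → PowerSeries ℂ)) : Prop :=
  (∀ w : ℂ, ¬ Module.End.HasEigenvalue (Matrix.mulVecLin (coeffM 0 A)) w → E w = ⊥) ∧
  DirectSum.IsInternal E ∧
  (∀ w, ∀ v ∈ E w, DA A v ∈ E w) ∧
  (∀ w : ℂ, piConst '' (E w : Set (Fin n → PowerSeries ℂ)) =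
    (Module.End.maxGenEigenspace (Matrix.mulVecLin (coeffM 0 A)) w : Set (Fin n → ℂ)))

/-!
Fix `w' ≠ w` and let `G` be `F` followed by the projection onto `E'_{w'}`; it intertwines `D_A`
and `D_{A'}`. Suppose `G` maps `E_w` into `u^k E'_{w'}`. Because `u²·d/du` raises the order of
vanishing, the `k`-th coefficient of `G` intertwines `D_A - w` with `A'_0 - w`, and because `E_w`
is saturated, on `E_w` it only depends on the residue, on which `A_0 - w` is nilpotent. So its
values lie in the generalized `w`-eigenspace of `A'_0`; they also lie in the generalized
`w'`-eigenspace, hence vanish, and `G` maps `E_w` into `u^{k+1} E'_{w'}`. Thus `G = 0` on `E_w`,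
i.e. `F E_w ⊆ E'_w`.
-/

namespace DirectSum

section AddSubmonoidClass

variable {ι M σ : Type*} [DecidableEq ι] [AddCommMonoid M] [SetLike σ M]
  [AddSubmonoidClass σ M] (ℳ : ι → σ) [Decomposition ℳ]

lemma mem_of_decompose_ne_eq_zero {x : M} {i : ι}
    (h : ∀ j ≠ i, (decompose ℳ x j : M) = 0) : x ∈ ℳ i := by
  have hx : decompose ℳ x = of (fun i => ℳ i) i (decompose ℳ x i) := by
    ext j
    by_cases hj : j = i
    · subst hj
      rw [of_eq_same]
    · rw [of_eq_of_ne _ _ _ hj, h j hj, ZeroMemClass.coe_zero]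
  rw [← (decompose ℳ).symm_apply_apply x, hx, decompose_symm_of]
  exact (decompose ℳ x i).2

lemma decompose_map_of_mapsTo (f : M →+ M) (hf : ∀ i, ∀ x ∈ ℳ i, f x ∈ ℳ i) (x : M) (i : ι) :
    (decompose ℳ (f x) i : M) = f (decompose ℳ x i) := by
  induction x using Decomposition.inductionOn ℳ with
  | zero => simp
  | @homogeneous j x =>
    by_cases hj : j = i
    · subst hj
      rw [decompose_of_mem_same ℳ (hf j x x.2), decompose_coe, of_eq_same]
    · rw [decompose_of_mem_ne ℳ (hf j x x.2) hj, decompose_of_mem_ne ℳ x.2 hj, map_zero]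
  | add x y hx hy => simp [hx, hy]

end AddSubmonoidClass

lemma mem_of_smul_mem {ι R M : Type*} [DecidableEq ι] [Semiring R] [AddCommMonoid M] [Module R M]
    (ℳ : ι → Submodule R M) [Decomposition ℳ] {r : R} (hr : IsSMulRegular M r) {x : M} {i : ι}
    (h : r • x ∈ ℳ i) : x ∈ ℳ i := by
  refine mem_of_decompose_ne_eq_zero ℳ fun j hj => hr ?_
  change r • _ = r • 0
  rw [smul_zero, ← Submodule.coe_smul, ← DirectSum.smul_apply, ← decompose_smul,
    decompose_of_mem_ne ℳ h (Ne.symm hj)]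

end DirectSum

lemma Module.End.mem_maxGenEigenspace_of_semiconj {K V V' S : Type*} [CommRing K]
    [AddCommGroup V] [Module K V] [AddCommGroup V'] [Module K V']
    {f : Module.End K V} {g : Module.End K V'} {μ : K} {T : S → S} {π : S → V} {θ : S → V'}
    (hπ : Function.Semiconj π T ⇑(f - μ • 1)) (hθ : Function.Semiconj θ T ⇑(g - μ • 1))
    (h0 : ∀ s, π s = 0 → θ s = 0) {s : S} (hs : π s ∈ f.maxGenEigenspace μ) :
    θ s ∈ g.maxGenEigenspace μ := by
  obtain ⟨N, hN⟩ := (f.mem_maxGenEigenspace μ _).mp hs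
  refine (g.mem_maxGenEigenspace μ _).mpr ⟨N, ?_⟩
  rw [Module.End.pow_apply, ← hθ.iterate_right N s]
  refine h0 _ ?_
  rw [hπ.iterate_right N s, ← Module.End.pow_apply, hN]

lemma psD_eq_derivative (f : ℂ⟦X⟧) : psD f = derivative ℂ f := by
  ext k
  simp [psD, coeff_derivative, mul_comm]

lemma X_sq_mul_psD_X_pow (k : ℕ) : X ^ 2 * psD (X ^ k : ℂ⟦X⟧) = (k : ℂ⟦X⟧) * X ^ (k + 1) := by
  rcases k with _ | k
  · simp [psD_eq_derivative]
  · simp [psD_eq_derivative, Derivation.leibniz_pow]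
    ring

lemma DA_add {n : ℕ} (A : Matrix (Fin n) (Fin n) ℂ⟦X⟧) (x y : Fin n → ℂ⟦X⟧) :
    DA A (x + y) = DA A x + DA A y := by
  funext i
  simp only [DA, Pi.add_apply, psD_eq_derivative, map_add, mulVec_add]
  ring

lemma DA_smul {n : ℕ} (A : Matrix (Fin n) (Fin n) ℂ⟦X⟧) (r : ℂ⟦X⟧) (x : Fin n → ℂ⟦X⟧) :
    DA A (r • x) = r • DA A x + (X ^ 2 * psD r) • x := by
  funext i
  simp only [DA, Pi.add_apply, Pi.smul_apply, smul_eq_mul, psD_eq_derivative,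
    Derivation.leibniz, mulVec_smul]
  ring

lemma DA_X_pow_smul {n : ℕ} (A : Matrix (Fin n) (Fin n) ℂ⟦X⟧) (k : ℕ) (x : Fin n → ℂ⟦X⟧) :
    DA A ((X : ℂ⟦X⟧) ^ k • x) = (X : ℂ⟦X⟧) ^ k • (DA A x + ((k : ℂ⟦X⟧) * X) • x) := by
  rw [DA_smul, X_sq_mul_psD_X_pow, smul_add, smul_smul]
  ring_nf

def coeffVec {n : ℕ} (k : ℕ) : (Fin n → ℂ⟦X⟧) →ₗ[ℂ] (Fin n → ℂ) :=
  LinearMap.pi fun i => (coeff k).comp (LinearMap.proj i)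

@[simp]
lemma coeffVec_apply {n : ℕ} (k : ℕ) (v : Fin n → ℂ⟦X⟧) (i : Fin n) :
    coeffVec k v i = coeff k (v i) := rfl

lemma coeffVec_zero_apply {n : ℕ} (v : Fin n → ℂ⟦X⟧) : coeffVec 0 v = piConst v := by
  funext i
  simp [piConst]

lemma coeffVec_X_pow_smul {n : ℕ} (k : ℕ) (v : Fin n → ℂ⟦X⟧) :
    coeffVec k ((X : ℂ⟦X⟧) ^ k • v) = piConst v := by
  funext i
  simp [piConst, coeff_X_pow_mul']

lemma piConst_X_smul {n : ℕ} (v : Fin n → ℂ⟦X⟧) : piConst ((X : ℂ⟦X⟧) • v) = 0 := by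
  funext i
  simp [piConst]

lemma piConst_mulVec {n m : ℕ} (M : Matrix (Fin m) (Fin n) ℂ⟦X⟧) (v : Fin n → ℂ⟦X⟧) :
    piConst (M *ᵥ v) = coeffM 0 M *ᵥ piConst v := by
  funext i
  simp [piConst, coeffM, mulVec, dotProduct]

lemma piConst_DA {n : ℕ} (A : Matrix (Fin n) (Fin n) ℂ⟦X⟧) (v : Fin n → ℂ⟦X⟧) :
    piConst (DA A v) = coeffM 0 A *ᵥ piConst v := by
  rw [← piConst_mulVec]
  funext i
  simp [piConst, DA]

lemma exists_eq_X_smul_of_piConst_eq_zero {n : ℕ} {v : Fin n → ℂ⟦X⟧} (hv : piConst v = 0) :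
    ∃ z, v = (X : ℂ⟦X⟧) • z := by
  choose z hz using fun i => X_dvd_iff.mpr (congrFun hv i)
  exact ⟨z, funext hz⟩

lemma coeffVec_DA_X_pow_smul {n : ℕ} (A : Matrix (Fin n) (Fin n) ℂ⟦X⟧) (k : ℕ)
    (v : Fin n → ℂ⟦X⟧) :
    coeffVec k (DA A ((X : ℂ⟦X⟧) ^ k • v)) = coeffM 0 A *ᵥ piConst v := by
  rw [DA_X_pow_smul, coeffVec_X_pow_smul, ← piConst_DA]
  funext i
  simp [piConst]

lemma psD_mulVec {n m : ℕ} (F : Matrix (Fin m) (Fin n) ℂ⟦X⟧) (v : Fin n → ℂ⟦X⟧) :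
    (fun i => psD ((F *ᵥ v) i)) = matD F *ᵥ v + F *ᵥ fun j => psD (v j) := by
  funext i
  simp [psD_eq_derivative, mulVec, dotProduct, matD, Finset.sum_add_distrib, mul_comm, add_comm]

lemma DA_eq_X_sq_smul_add_mulVec {n : ℕ} (A : Matrix (Fin n) (Fin n) ℂ⟦X⟧)
    (v : Fin n → ℂ⟦X⟧) :
    DA A v = (X : ℂ⟦X⟧) ^ 2 • (fun i => psD (v i)) + A *ᵥ v := rfl

lemma mulVec_DA {n m : ℕ} {A : Matrix (Fin n) (Fin n) ℂ⟦X⟧} {A' : Matrix (Fin m) (Fin m) ℂ⟦X⟧}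
    {F : Matrix (Fin m) (Fin n) ℂ⟦X⟧} (hF : (X ^ 2 : ℂ⟦X⟧) • matD F = F * A - A' * F)
    (v : Fin n → ℂ⟦X⟧) :
    F *ᵥ DA A v = DA A' (F *ᵥ v) := by
  rw [DA_eq_X_sq_smul_add_mulVec, DA_eq_X_sq_smul_add_mulVec, psD_mulVec, smul_add,
    ← smul_mulVec, hF, mulVec_add, mulVec_smul, sub_mulVec, ← mulVec_mulVec, ← mulVec_mulVec]
  abel

section Vanishing

variable {n m : ℕ} {A : Matrix (Fin n) (Fin n) ℂ⟦X⟧} {A' : Matrix (Fin m) (Fin m) ℂ⟦X⟧}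
  {M : Submodule ℂ⟦X⟧ (Fin n → ℂ⟦X⟧)} {M' : Submodule ℂ⟦X⟧ (Fin m → ℂ⟦X⟧)}
  {G : (Fin n → ℂ⟦X⟧) →ₗ[ℂ⟦X⟧] (Fin m → ℂ⟦X⟧)} {w w' : ℂ}

theorem exists_X_pow_succ_smul_of_residue_eigenvalue_ne (hne : w ≠ w')
    (hMD : ∀ x ∈ M, DA A x ∈ M) (hMX : ∀ x, (X : ℂ⟦X⟧) • x ∈ M → x ∈ M)
    (hM'X : ∀ y, (X : ℂ⟦X⟧) • y ∈ M' → y ∈ M')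
    (hMres : ∀ x ∈ M, piConst x ∈ Module.End.maxGenEigenspace (coeffM 0 A).mulVecLin w)
    (hM'res : ∀ y ∈ M', piConst y ∈ Module.End.maxGenEigenspace (coeffM 0 A').mulVecLin w')
    (hGD : ∀ x ∈ M, G (DA A x) = DA A' (G x)) {k : ℕ}
    (hk : ∀ x ∈ M, ∃ y ∈ M', G x = (X : ℂ⟦X⟧) ^ k • y) :
    ∀ x ∈ M, ∃ y ∈ M', G x = (X : ℂ⟦X⟧) ^ (k + 1) • y := by
  let T : M → M := fun s => ⟨DA A s - w • (s : Fin n → ℂ⟦X⟧),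
    sub_mem (hMD s s.2) (M.smul_of_tower_mem w s.2)⟩
  have hπT : Function.Semiconj (fun s : M => piConst (s : Fin n → ℂ⟦X⟧)) T
      ⇑((coeffM 0 A).mulVecLin - w • 1) := fun s => by
    simpa [T, ← coeffVec_zero_apply] using coeffVec_DA_X_pow_smul A 0 s
  have hθT : Function.Semiconj (fun s : M => coeffVec k (G s)) T
      ⇑((coeffM 0 A').mulVecLin - w • 1) := fun s => by
    obtain ⟨t, -, ht⟩ := hk s s.2
    simp [T, hGD s s.2, ht, coeffVec_DA_X_pow_smul, coeffVec_X_pow_smul]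
  have h0 : ∀ s : M, piConst (s : Fin n → ℂ⟦X⟧) = 0 → coeffVec k (G s) = 0 := fun s hs => by
    obtain ⟨z, hz⟩ := exists_eq_X_smul_of_piConst_eq_zero hs
    obtain ⟨t, -, ht⟩ := hk z (hMX z (hz ▸ s.2))
    rw [hz, map_smul, ht, smul_comm, coeffVec_X_pow_smul, piConst_X_smul]
  intro x hx
  obtain ⟨y, hyM', hy⟩ := hk x hx
  have hres : piConst y ∈ Module.End.maxGenEigenspace (coeffM 0 A').mulVecLin w ⊓
      Module.End.maxGenEigenspace (coeffM 0 A').mulVecLin w' := by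
    refine ⟨?_, hM'res y hyM'⟩
    rw [← coeffVec_X_pow_smul k y, ← hy]
    exact Module.End.mem_maxGenEigenspace_of_semiconj hπT hθT h0 (s := ⟨x, hx⟩) (hMres x hx)
  rw [(Module.End.disjoint_genEigenspace _ hne ⊤ ⊤).eq_bot, Submodule.mem_bot] at hres
  obtain ⟨z, rfl⟩ := exists_eq_X_smul_of_piConst_eq_zero hres
  exact ⟨z, hM'X z hyM', by rw [hy, smul_smul, pow_succ]⟩

theorem eq_zero_of_residue_eigenvalue_ne (hne : w ≠ w')
    (hMD : ∀ x ∈ M, DA A x ∈ M) (hMX : ∀ x, (X : ℂ⟦X⟧) • x ∈ M → x ∈ M)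
    (hM'X : ∀ y, (X : ℂ⟦X⟧) • y ∈ M' → y ∈ M')
    (hMres : ∀ x ∈ M, piConst x ∈ Module.End.maxGenEigenspace (coeffM 0 A).mulVecLin w)
    (hM'res : ∀ y ∈ M', piConst y ∈ Module.End.maxGenEigenspace (coeffM 0 A').mulVecLin w')
    (hGM : ∀ x ∈ M, G x ∈ M') (hGD : ∀ x ∈ M, G (DA A x) = DA A' (G x)) :
    ∀ x ∈ M, G x = 0 := by
  have hdiv : ∀ k, ∀ x ∈ M, ∃ y ∈ M', G x = (X : ℂ⟦X⟧) ^ k • y := by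
    intro k
    induction k with
    | zero => exact fun x hx => ⟨G x, hGM x hx, by rw [pow_zero, one_smul]⟩
    | succ k ih =>
      exact exists_X_pow_succ_smul_of_residue_eigenvalue_ne hne hMD hMX hM'X hMres hM'res hGD ih
  intro x hx
  funext i
  ext j
  obtain ⟨y, -, hy⟩ := hdiv (j + 1) x hx
  simp [hy, coeff_X_pow_mul']

end Vanishing

/-- Morphisms of E-structures respect the eigenvalue decompositions. -/
theorem morphism_respects_decomposition (n m : ℕ)
    (A : Matrix (Fin n) (Fin n) (PowerSeries ℂ))
    (A' : Matrix (Fin m) (Fin m) (PowerSeries ℂ))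
    (F : Matrix (Fin m) (Fin n) (PowerSeries ℂ))
    (hF : (PowerSeries.X ^ 2 : PowerSeries ℂ) • matD F = F * A - A' * F)
    (E : ℂ → Submodule (PowerSeries ℂ) (Fin n → PowerSeries ℂ))
    (E' : ℂ → Submodule (PowerSeries ℂ) (Fin m → PowerSeries ℂ))
    (hE : IsEigenDecomp A E) (hE' : IsEigenDecomp A' E') :
    ∀ w : ℂ, ∀ v ∈ E w, F.mulVec v ∈ E' w := by
  obtain ⟨-, hEint, hED, hEres⟩ := hE
  obtain ⟨-, hE'int, hE'D, hE'res⟩ := hE'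
  let := hEint.chooseDecomposition
  let := hE'int.chooseDecomposition
  have hX {N : ℕ} : IsSMulRegular (Fin N → ℂ⟦X⟧) (X : ℂ⟦X⟧) := .of_ne_zero X_ne_zero
  intro w v hv
  refine DirectSum.mem_of_decompose_ne_eq_zero E' fun w' hw' => ?_
  let G := (E' w').subtype ∘ₗ DirectSum.component ℂ⟦X⟧ ℂ (fun i => E' i) w' ∘ₗ
    (DirectSum.decomposeLinearEquiv E').toLinearMap ∘ₗ F.mulVecLin
  refine eq_zero_of_residue_eigenvalue_ne (G := G) (Ne.symm hw') (hED w)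
    (fun _ => DirectSum.mem_of_smul_mem E hX) (fun _ => DirectSum.mem_of_smul_mem E' hX)
    (fun x hx => (hEres w).le ⟨x, hx, rfl⟩) (fun y hy => (hE'res w').le ⟨y, hy, rfl⟩)
    (fun x _ => (DirectSum.decompose E' (F *ᵥ x) w').2) (fun x _ => ?_) v hv
  change (DirectSum.decompose E' (F *ᵥ DA A x) w' : Fin m → ℂ⟦X⟧) =
    DA A' (DirectSum.decompose E' (F *ᵥ x) w')
  rw [mulVec_DA hF]
  exact DirectSum.decompose_map_of_mapsTo E' (AddMonoidHom.mk' (DA A') (DA_add A')) hE'D _ w'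

end
end

section
/- Let A ∈ M_n(ℂ[[u]]) and A′ ∈ M_m(ℂ[[u]]), and let F ∈ M_{m×n}(ℂ[[u]]) satisfy u²·(dF/du) = F·A − A′·F. If the residues A_0 = A(0) and A′_0 = A′(0) have no eigenvalue in common, then F = 0. -/
/-!
Compare coefficients of `u^k` in `u²·F' = F·A − A′·F`. If `F_j = 0` for all `j < k`, the left
side has no `u^k` term (it only sees `F_{k-1}`), and the right side contributes
`F_k·A_0 − A′_0·F_k`; so `F_k` intertwines the residues. An intertwiner `G·C = B·G` of matrices
with disjoint spectra vanishes: with `χ` the characteristic polynomial of `C`,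
`0 = G·χ(C) = χ(B)·G` by Cayley–Hamilton, and `χ(B)` is invertible since by spectral mapping its
spectrum is `χ(σ(B))`, which avoids `0`. Induction on `k` gives `F = 0`.
-/

open PowerSeries Matrix

noncomputable section

namespace Matrix

open Polynomial (aeval)

variable {R K : Type*} [CommSemiring R] [Field K] {m n : Type*} [Fintype m] [DecidableEq m]
  [Fintype n] [DecidableEq n]

theorem mul_pow_eq_pow_mul_of_mul_eq_mul {C : Matrix n n R} {B : Matrix m m R}
    {G : Matrix m n R} (h : G * C = B * G) (k : ℕ) : G * C ^ k = B ^ k * G := by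
  induction k with
  | zero => simp
  | succ k ih =>
    rw [pow_succ, ← Matrix.mul_assoc, ih, Matrix.mul_assoc, h, ← Matrix.mul_assoc, ← pow_succ]

theorem mul_aeval_eq_aeval_mul_of_mul_eq_mul {C : Matrix n n R} {B : Matrix m m R}
    {G : Matrix m n R} (h : G * C = B * G) (p : Polynomial R) : G * aeval C p = aeval B p * G := by
  induction p using Polynomial.induction_on' with
  | add p q hp hq => simp only [map_add, Matrix.mul_add, Matrix.add_mul, hp, hq]
  | monomial k a =>
    simp only [Polynomial.aeval_monomial, Algebra.algebraMap_eq_smul_one, smul_mul, one_mul,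
      Matrix.mul_smul, mul_pow_eq_pow_mul_of_mul_eq_mul h]

theorem eq_zero_of_mul_eq_mul_of_disjoint_spectrum [IsAlgClosed K] {C : Matrix n n K}
    {B : Matrix m m K} {G : Matrix m n K} (h : G * C = B * G)
    (hd : Disjoint (spectrum K C) (spectrum K B)) : G = 0 := by
  cases isEmpty_or_nonempty n
  · exact Subsingleton.elim _ _
  have hunit : IsUnit (aeval B C.charpoly) := by
    rw [← spectrum.zero_notMem_iff K, spectrum.map_polynomial_aeval_of_degree_pos B _
      (by simp [charpoly_degree_eq_dim, Fintype.card_pos])]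
    rintro ⟨r, hrB, hr⟩
    exact hd.notMem_of_mem_right hrB (mem_spectrum_iff_isRoot_charpoly.mpr hr)
  have hzero : aeval B C.charpoly * G = 0 := by
    rw [← mul_aeval_eq_aeval_mul_of_mul_eq_mul h, aeval_self_charpoly, Matrix.mul_zero]
  calc G = (aeval B C.charpoly)⁻¹ * (aeval B C.charpoly * G) :=
        (nonsing_inv_mul_cancel_left _ G ((isUnit_iff_isUnit_det _).mp hunit)).symm
    _ = 0 := by rw [hzero, Matrix.mul_zero]

theorem hasEigenvalue_mulVecLin_iff (A : Matrix n n K) (μ : K) :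
    Module.End.HasEigenvalue A.mulVecLin μ ↔ μ ∈ spectrum K A := by
  rw [Module.End.hasEigenvalue_iff_mem_spectrum, ← spectrum_toLin']
  rfl

end Matrix

section coeffM

variable {l m n : Type*}

theorem coeffM_sub (k : ℕ) (M N : Matrix m n (PowerSeries ℂ)) :
    coeffM k (M - N) = coeffM k M - coeffM k N := by
  ext i j
  simp [coeffM]

theorem eq_zero_of_forall_coeffM_eq_zero {M : Matrix m n (PowerSeries ℂ)}
    (h : ∀ k, coeffM k M = 0) : M = 0 := by
  ext i j k
  simpa [coeffM] using congrFun (congrFun (h k) i) j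

open Finset in
theorem coeffM_mul [Fintype m] (k : ℕ) (M : Matrix l m (PowerSeries ℂ))
    (N : Matrix m n (PowerSeries ℂ)) :
    coeffM k (M * N) = ∑ p ∈ antidiagonal k, coeffM p.1 M * coeffM p.2 N := by
  ext i j
  simp only [coeffM, mul_apply, map_sum, coeff_mul, Matrix.sum_apply, of_apply]
  exact Finset.sum_comm

theorem coeffM_mul_of_forall_lt_left [Fintype m] {k : ℕ} {M : Matrix l m (PowerSeries ℂ)}
    (hM : ∀ j < k, coeffM j M = 0) (N : Matrix m n (PowerSeries ℂ)) :
    coeffM k (M * N) = coeffM k M * coeffM 0 N := by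
  rw [coeffM_mul, Finset.sum_eq_single_of_mem (k, 0) (by simp)]
  rintro ⟨a, b⟩ hab hne
  rw [Finset.HasAntidiagonal.mem_antidiagonal] at hab
  rw [hM a (by grind), Matrix.zero_mul]

theorem coeffM_mul_of_forall_lt_right [Fintype m] {k : ℕ} (M : Matrix l m (PowerSeries ℂ))
    {N : Matrix m n (PowerSeries ℂ)} (hN : ∀ j < k, coeffM j N = 0) :
    coeffM k (M * N) = coeffM 0 M * coeffM k N := by
  rw [coeffM_mul, Finset.sum_eq_single_of_mem (0, k) (by simp)]
  rintro ⟨a, b⟩ hab hne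
  rw [Finset.HasAntidiagonal.mem_antidiagonal] at hab
  rw [hN b (by grind), Matrix.mul_zero]

theorem coeffM_X_sq_smul_matD_of_forall_lt {k : ℕ} {M : Matrix m n (PowerSeries ℂ)}
    (hM : ∀ j < k, coeffM j M = 0) : coeffM k ((X ^ 2 : PowerSeries ℂ) • matD M) = 0 := by
  ext i j
  rcases Nat.lt_or_ge k 2 with hk | hk
  · simp [coeffM, coeff_X_pow_mul', Nat.not_le.mpr hk]
  · obtain ⟨d, rfl⟩ := Nat.exists_eq_add_of_le' hk
    have hcoeff : coeff (d + 1) (M i j) = 0 := by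
      simpa [coeffM] using congrFun (congrFun (hM (d + 1) (by omega)) i) j
    simp [coeffM, matD, psD, hcoeff]

end coeffM

theorem eq_zero_of_X_sq_smul_matD_eq_of_disjoint_spectrum {m n : Type*} [Fintype m]
    [DecidableEq m] [Fintype n] [DecidableEq n] {A : Matrix n n (PowerSeries ℂ)}
    {A' : Matrix m m (PowerSeries ℂ)} {F : Matrix m n (PowerSeries ℂ)}
    (hF : (X ^ 2 : PowerSeries ℂ) • matD F = F * A - A' * F)
    (hd : Disjoint (spectrum ℂ (coeffM 0 A)) (spectrum ℂ (coeffM 0 A'))) : F = 0 := by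
  refine eq_zero_of_forall_coeffM_eq_zero fun k => ?_
  induction k using Nat.strong_induction_on with
  | _ k ih =>
    refine Matrix.eq_zero_of_mul_eq_mul_of_disjoint_spectrum ?_ hd
    have hk := congrArg (coeffM k) hF
    rw [coeffM_X_sq_smul_matD_of_forall_lt ih, coeffM_sub, coeffM_mul_of_forall_lt_left ih,
      coeffM_mul_of_forall_lt_right _ ih] at hk
    exact sub_eq_zero.mp hk.symm

/-- A morphism between E-structures whose residues have disjoint spectra vanishes. -/
theorem morphism_eq_zero_of_disjoint_spectra (n m : ℕ)
    (A : Matrix (Fin n) (Fin n) (PowerSeries ℂ))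
    (A' : Matrix (Fin m) (Fin m) (PowerSeries ℂ))
    (F : Matrix (Fin m) (Fin n) (PowerSeries ℂ))
    (hF : (PowerSeries.X ^ 2 : PowerSeries ℂ) • matD F = F * A - A' * F)
    (hdisj : ∀ w : ℂ, ¬ (Module.End.HasEigenvalue (Matrix.mulVecLin (coeffM 0 A)) w ∧
      Module.End.HasEigenvalue (Matrix.mulVecLin (coeffM 0 A')) w)) :
    F = 0 := by
  refine eq_zero_of_X_sq_smul_matD_eq_of_disjoint_spectrum hF
    (Set.disjoint_left.mpr fun w hA hA' => hdisj w ⟨?_, ?_⟩)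
  · exact (hasEigenvalue_mulVecLin_iff _ w).mpr hA
  · exact (hasEigenvalue_mulVecLin_iff _ w).mpr hA'

end
end

section
/- Let A_0 ∈ M_n(ℂ) with generalized eigenspace decomposition ℂ^n = ⊕_w Ẽ_w, where Ẽ_w is the generalized eigenspace of A_0 for the eigenvalue w. Let W_{A_0} = { φ ∈ End_ℂ(ℂ^n) : π_w ∘ φ|_{Ẽ_w} = 0 for every eigenvalue w }, where π_w : ℂ^n → Ẽ_w is the projection along the other generalized eigenspaces (i.e. W_{A_0} consists of the linear maps whose diagonal blocks with respect to the decomposition vanish). Then the adjoint map ad_{A_0} = [A_0, −] maps W_{A_0} into W_{A_0}, and its restriction ad_{A_0} : W_{A_0} → W_{A_0} is a linear isomorphism. -/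
/-!
If `φ` commutes with `A_0`, it preserves every generalized eigenspace `Ẽ_w`; if moreover
`φ` has vanishing diagonal blocks, then `φ(Ẽ_w)` lies in `Ẽ_w ∩ ⊕_{w' ≠ w} Ẽ_{w'} = 0`, so
`φ = 0` because the `Ẽ_w` span `ℂ^n`. Hence `ad_{A_0}` is injective on the off-diagonal maps,
which it preserves since `A_0` preserves each `Ẽ_w`, and injectivity on a finite-dimensional
space gives bijectivity.
-/

namespace Module.End

attribute [local instance] LieRing.ofAssociativeRing

variable {R M : Type*} [CommRing R] [AddCommGroup M] [Module R M]

def offDiagonal (f : End R M) : Submodule R (End R M) where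
  carrier := {φ | ∀ μ, ∀ x ∈ f.maxGenEigenspace μ,
    φ x ∈ ⨆ ν, ⨆ _ : ν ≠ μ, f.maxGenEigenspace ν}
  add_mem' hφ hψ μ x hx := add_mem (hφ μ x hx) (hψ μ x hx)
  zero_mem' _ _ _ := zero_mem _
  smul_mem' c _ hφ μ x hx := Submodule.smul_mem _ c (hφ μ x hx)

lemma mapsTo_iSup_maxGenEigenspace_ne_of_comm {f g : End R M} (h : Commute f g) (μ : R) :
    Set.MapsTo g (⨆ ν, ⨆ _ : ν ≠ μ, f.maxGenEigenspace ν : Submodule R M)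
      (⨆ ν, ⨆ _ : ν ≠ μ, f.maxGenEigenspace ν : Submodule R M) := by
  have hle : (⨆ ν, ⨆ _ : ν ≠ μ, f.maxGenEigenspace ν) ≤
      (⨆ ν, ⨆ _ : ν ≠ μ, f.maxGenEigenspace ν).comap g :=
    iSup₂_le fun ν hν _ hx =>
      le_iSup₂ (f := fun ν (_ : ν ≠ μ) => f.maxGenEigenspace ν) ν hν
        (mapsTo_maxGenEigenspace_of_comm h ν hx)
  exact fun _ hx => hle hx

lemma mapsTo_ad_offDiagonal (f : End R M) :
    Set.MapsTo (LieAlgebra.ad R (End R M) f) f.offDiagonal f.offDiagonal := by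
  intro φ hφ μ x hx
  rw [LieAlgebra.ad_apply, Ring.lie_def, LinearMap.sub_apply]
  exact sub_mem (mapsTo_iSup_maxGenEigenspace_ne_of_comm (Commute.refl f) μ (hφ μ x hx))
    (hφ μ _ (mapsTo_maxGenEigenspace_of_comm (Commute.refl f) μ hx))

lemma disjoint_offDiagonal_ker_ad [IsDomain R] [IsTorsionFree R M] {f : End R M}
    (hf : ⨆ μ, f.maxGenEigenspace μ = ⊤) :
    Disjoint f.offDiagonal (LinearMap.ker (LieAlgebra.ad R (End R M) f)) := by
  refine Submodule.disjoint_def.mpr fun φ hφ hker => ?_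
  have hcomm : Commute f φ := commute_iff_lie_eq.mpr hker
  have hblock (μ : R) : f.maxGenEigenspace μ ≤ LinearMap.ker φ := fun x hx =>
    (f.independent_maxGenEigenspace μ).le_bot
      ⟨mapsTo_maxGenEigenspace_of_comm hcomm μ hx, hφ μ x hx⟩
  rw [← LinearMap.ker_eq_top, eq_top_iff, ← hf]
  exact iSup_le hblock

lemma bijOn_ad_offDiagonal {K V : Type*} [Field K] [AddCommGroup V] [Module K V]
    [FiniteDimensional K V] {f : End K V} (hf : ⨆ μ, f.maxGenEigenspace μ = ⊤) :
    Set.BijOn (LieAlgebra.ad K (End K V) f) f.offDiagonal f.offDiagonal := by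
  have hinj := LinearMap.disjoint_ker_iff_injOn.mp (disjoint_offDiagonal_ker_ad hf)
  exact ⟨mapsTo_ad_offDiagonal f, hinj,
    (LinearMap.injOn_iff_surjOn (mapsTo_ad_offDiagonal f)).mp hinj⟩

end Module.End

/-- The commutator with left multiplication by `A_0`. -/
theorem ad_restricts_to_iso_on_offdiagonal_blocks (n : ℕ) (A0 : Matrix (Fin n) (Fin n) ℂ) :
    ∀ W : Set (Module.End ℂ (Fin n → ℂ)),
      W = {φ : Module.End ℂ (Fin n → ℂ) |
        ∀ w : ℂ, ∀ x ∈ Module.End.maxGenEigenspace (Matrix.mulVecLin A0) w,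
          φ x ∈ ⨆ w' : ℂ, ⨆ _ : w' ≠ w,
            Module.End.maxGenEigenspace (Matrix.mulVecLin A0) w'} →
      Set.MapsTo (fun φ : Module.End ℂ (Fin n → ℂ) =>
          Matrix.mulVecLin A0 ∘ₗ φ - φ ∘ₗ Matrix.mulVecLin A0) W W ∧
      Set.BijOn (fun φ : Module.End ℂ (Fin n → ℂ) =>
          Matrix.mulVecLin A0 ∘ₗ φ - φ ∘ₗ Matrix.mulVecLin A0) W W := by
  rintro W rfl
  have hbij := Module.End.bijOn_ad_offDiagonal (Module.End.iSup_maxGenEigenspace_eq_top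
    (Matrix.mulVecLin A0))
  -- `ad` unfolds to `φ ↦ A ∘ₗ φ - φ ∘ₗ A` and `offDiagonal` to the set `W`, definitionally.
  exact ⟨hbij.mapsTo, hbij⟩
end

section
/- Let A = ∑_{i≥0} A_i u^i ∈ M_n(ℂ[[u]]) with diagonal residue A_0 = diag(w_1, …, w_n), and suppose that the entry (A_1)_{jk} = 0 whenever w_j = w_k. Then there exist v_1, …, v_n ∈ ℂ[[u]]^n with constant terms v_j(0) = e_j (the j-th standard basis vector) such that u²·(dv_j/du) + A·v_j = w_j·v_j for every j; equivalently, there exists P ∈ GL_n(ℂ[[u]]) with P(0) = Id and P^{-1}AP + u²P^{-1}(dP/du) = A_0. (Existence of a basis of w-flat sections: a semi-simple residue together with vanishing diagonal blocks of A_1 forces the E-structure to be isomorphic to a direct sum of one-dimensional E-structures E^{-w/u}.) -/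
/-!
A `w_j`-flat section `v = ∑ c_m u^m` is built coefficient by coefficient. Since `A_0 = diag(w)`,
the `u^(m+1)`-coefficient of `u² v' + A v = w_j v` reads
`(w_k - w_j) c_{m+1,k} + m c_{m,k} + ∑_{p+q=m} (A_{p+1} c_q)_k = 0`.
Off the block `{k | w_k = w_j}` it determines `c_{m+1,k}`. On the block the first term drops out,
and the equation is solved by the block part of `c_m`, which enters with the factor `m`: the only
other occurrence of `c_m` is `A_1 c_m`, and since `A_1` vanishes on the diagonal blocks this sees
only the off-block part of `c_m`, already fixed by the previous equation. For `m = 0` the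
block equation is `(A_1)_{kj} = 0`. The sections `v_j` are the columns of the gauge
transformation `P`, which is invertible because `P(0) = 1`.
-/

open PowerSeries Matrix

noncomputable section

open Finset

namespace FlatSection

theorem mulVec_apply_eq_of_eq_off_block {R ι κ : Type*} [CommSemiring R] [Fintype ι]
    {B : Matrix ι ι R} {w : ι → κ} (hB : ∀ k l, w k = w l → B k l = 0) {x y : ι → R} {k : ι}
    (hxy : ∀ l, w l ≠ w k → x l = y l) : (B *ᵥ x) k = (B *ᵥ y) k := by
  refine sum_congr rfl fun l _ => ?_
  by_cases hl : w l = w k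
  · simp only [hB k l hl.symm, zero_mul]
  · rw [hxy l hl]

variable {K ι : Type*} [Field K] [DecidableEq K] [Fintype ι]
  (a : ℕ → Matrix ι ι K) (w : ι → K) (j : ι)

def lowerOrderTerms (c : ℕ → ι → K) (m : ℕ) : ι → K :=
  (m : K) • c m + ∑ pq ∈ antidiagonal m, a (pq.1 + 1) *ᵥ c pq.2

def offBlockCoeff (c : ℕ → ι → K) (m : ℕ) : ι → K := fun k =>
  if w k = w j then 0 else lowerOrderTerms a c m k / (w j - w k)

/-- Off the `w j`-block, `c (m + 1)` solves the `u ^ (m + 1)`-equation; on the block it solves the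
`u ^ (m + 2)`-equation, which sees the off-block part of `c (m + 1)` only through `a 1`. -/
def nextCoeff (c : ℕ → ι → K) (m : ℕ) : ι → K := fun k =>
  if w k = w j then
    -(a 1 *ᵥ offBlockCoeff a w j c m + ∑ pq ∈ antidiagonal m, a (pq.1 + 2) *ᵥ c pq.2) k / (m + 1)
  else offBlockCoeff a w j c m k

theorem nextCoeff_congr {c c' : ℕ → ι → K} {m : ℕ} (h : ∀ q ≤ m, c q = c' q) :
    nextCoeff a w j c m = nextCoeff a w j c' m := by
  have hsum : ∀ s : ℕ, ∑ pq ∈ antidiagonal m, a (pq.1 + s) *ᵥ c pq.2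
      = ∑ pq ∈ antidiagonal m, a (pq.1 + s) *ᵥ c' pq.2 := fun s =>
    sum_congr rfl fun pq hpq => by rw [h pq.2 (HasAntidiagonal.antidiagonal.snd_le hpq)]
  have hoff : offBlockCoeff a w j c m = offBlockCoeff a w j c' m := by
    ext k
    simp only [offBlockCoeff, lowerOrderTerms, h m le_rfl, hsum]
  ext k
  simp only [nextCoeff, hoff, hsum]

variable [DecidableEq ι]

def flatCoeff : ℕ → ι → K
  | 0 => Pi.single j 1
  | m + 1 => nextCoeff a w j (fun q => if _ : q < m + 1 then flatCoeff q else 0) m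

theorem flatCoeff_zero : flatCoeff a w j 0 = Pi.single j 1 := by
  rw [flatCoeff]

theorem flatCoeff_succ (m : ℕ) :
    flatCoeff a w j (m + 1) = nextCoeff a w j (flatCoeff a w j) m := by
  rw [flatCoeff]
  exact nextCoeff_congr a w j fun q hq => dif_pos (Nat.lt_succ_of_le hq)

theorem flatCoeff_recurrence [CharZero K] (h1 : ∀ k l, w k = w l → a 1 k l = 0) (m : ℕ) (k : ι) :
    (w k - w j) * flatCoeff a w j (m + 1) k + lowerOrderTerms a (flatCoeff a w j) m k = 0 := by
  by_cases hk : w k = w j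
  · rw [hk, sub_self, zero_mul, zero_add]
    cases m with
    | zero =>
      simp only [lowerOrderTerms, flatCoeff_zero, Nat.cast_zero, zero_smul, zero_add,
        Finset.Nat.antidiagonal_zero, sum_singleton, mulVec_single_one, col_apply]
      exact h1 k j hk
    | succ m =>
      have hcoeff_off : ∀ l, w l ≠ w k →
          flatCoeff a w j (m + 1) l = offBlockCoeff a w j (flatCoeff a w j) m l := fun l hl => by
        rw [flatCoeff_succ, nextCoeff, if_neg (hk ▸ hl)]
      have hm : (m : K) + 1 ≠ 0 := Nat.cast_add_one_ne_zero m
      rw [lowerOrderTerms, Finset.Nat.sum_antidiagonal_succ, Pi.add_apply, Pi.add_apply,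
        Pi.smul_apply, mulVec_apply_eq_of_eq_off_block h1 hcoeff_off, flatCoeff_succ, nextCoeff,
        if_pos hk, Pi.add_apply, smul_eq_mul, Nat.cast_succ, mul_div_cancel₀ _ hm]
      exact neg_add_cancel _
  · have hw : w j - w k ≠ 0 := sub_ne_zero.2 (Ne.symm hk)
    rw [flatCoeff_succ, nextCoeff, if_neg hk, offBlockCoeff, if_neg hk]
    field_simp
    ring

end FlatSection

open FlatSection

theorem coeff_mulVec_eq_sum {ι : Type*} [Fintype ι] (A : Matrix ι ι ℂ⟦X⟧) (v : ι → ℂ⟦X⟧)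
    (m : ℕ) : (fun i => coeff m ((A *ᵥ v) i))
      = ∑ pq ∈ antidiagonal m, coeffM pq.1 A *ᵥ fun i => coeff pq.2 (v i) := by
  ext i
  simp only [mulVec, dotProduct, map_sum, coeff_mul, Finset.sum_apply, coeffM, of_apply]
  exact sum_comm

theorem coeff_zero_X_sq_mul_psD (f : ℂ⟦X⟧) : coeff 0 (X ^ 2 * psD f) = 0 := by
  rw [coeff_X_pow_mul']
  norm_num

theorem coeff_succ_X_sq_mul_psD (f : ℂ⟦X⟧) (m : ℕ) :
    coeff (m + 1) (X ^ 2 * psD f) = m * coeff m f := by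
  cases m with
  | zero => simp [coeff_X_pow_mul']
  | succ m =>
    rw [coeff_X_pow_mul _ 2 m, psD, coeff_mk]
    push_cast
    ring

section

variable {n : ℕ}

theorem coeff_zero_DA (A : Matrix (Fin n) (Fin n) ℂ⟦X⟧) (v : Fin n → ℂ⟦X⟧) :
    (fun i => coeff 0 (DA A v i)) = coeffM 0 A *ᵥ fun i => coeff 0 (v i) := by
  ext i
  simp only [DA, map_add, coeff_zero_X_sq_mul_psD, zero_add, congrFun (coeff_mulVec_eq_sum A v 0) i]
  simp

theorem coeff_succ_DA (A : Matrix (Fin n) (Fin n) ℂ⟦X⟧) (v : Fin n → ℂ⟦X⟧) (m : ℕ) :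
    (fun i => coeff (m + 1) (DA A v i)) = coeffM 0 A *ᵥ (fun i => coeff (m + 1) (v i))
      + lowerOrderTerms (fun p => coeffM p A) (fun q i => coeff q (v i)) m := by
  ext i
  simp only [DA, map_add, coeff_succ_X_sq_mul_psD, congrFun (coeff_mulVec_eq_sum A v _) i,
    Finset.Nat.sum_antidiagonal_succ, lowerOrderTerms, Pi.add_apply, Pi.smul_apply, smul_eq_mul]
  ring

theorem exists_flat_section (A : Matrix (Fin n) (Fin n) ℂ⟦X⟧) (w : Fin n → ℂ)
    (h0 : coeffM 0 A = diagonal w) (h1 : ∀ k l, w k = w l → coeffM 1 A k l = 0) (j : Fin n) :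
    ∃ v : Fin n → ℂ⟦X⟧, piConst v = Pi.single j 1 ∧ DA A v = fun i => C (w j) * v i := by
  set c := flatCoeff (fun p => coeffM p A) w j
  set v : Fin n → ℂ⟦X⟧ := fun i => mk fun m => c m i
  have hc : (fun q i => coeff q (v i)) = c := funext fun m => funext fun i => coeff_mk m _
  have hc0 : c 0 = Pi.single j 1 := flatCoeff_zero _ w j
  suffices h : ∀ m, (fun i => coeff m (DA A v i)) = w j • c m by
    refine ⟨v, ?_, funext fun i => ext fun m => ?_⟩
    · ext i
      rw [piConst, ← coeff_zero_eq_constantCoeff_apply, ← hc0, ← hc]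
    · rw [coeff_C_mul, show coeff m (v i) = c m i from coeff_mk m _]
      exact congrFun (h m) i
  rintro (_ | m)
  · rw [coeff_zero_DA, congrFun hc 0, h0, hc0]
    ext k
    rw [mulVec_diagonal]
    by_cases hk : k = j <;> simp [hk]
  · rw [coeff_succ_DA, hc, congrFun hc, h0]
    ext k
    rw [Pi.add_apply, mulVec_diagonal, Pi.smul_apply, smul_eq_mul]
    linear_combination flatCoeff_recurrence (fun p => coeffM p A) w j h1 m k

theorem isUnit_of_coeffM_zero_eq_one {ι : Type*} [Fintype ι] [DecidableEq ι]
    {P : Matrix ι ι ℂ⟦X⟧} (hP : coeffM 0 P = 1) : IsUnit P := by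
  have hconst : P.map constantCoeff = 1 := by
    rw [← hP]
    ext i j
    simp [coeffM]
  rw [isUnit_iff_isUnit_det, isUnit_iff_constantCoeff, RingHom.map_det, RingHom.mapMatrix_apply,
    hconst, det_one]
  exact isUnit_one

theorem gauge_eq_of_flat_columns {A P : Matrix (Fin n) (Fin n) ℂ⟦X⟧} {w : Fin n → ℂ}
    (hP : ∀ j, DA A (fun i => P i j) = fun i => C (w j) * P i j) :
    A * P + (X ^ 2 : ℂ⟦X⟧) • matD P = P * (diagonal w).map C := by
  ext i j
  rw [diagonal_map (map_zero _), mul_diagonal, mul_comm, ← congrFun (hP j) i, DA, add_comm]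
  rfl

end

/-- Existence of a basis of `w`-flat sections for a semi-simple residue with vanishing
diagonal blocks of `A_1`. -/
theorem flat_basis_of_semisimple_residue (n : ℕ)
    (A : Matrix (Fin n) (Fin n) (PowerSeries ℂ)) (w : Fin n → ℂ)
    (h0 : coeffM 0 A = Matrix.diagonal w)
    (h1 : ∀ j k : Fin n, w j = w k → coeffM 1 A j k = 0) :
    (∃ v : Fin n → (Fin n → PowerSeries ℂ),
      (∀ j, piConst (v j) = Pi.single j 1) ∧
      (∀ j, DA A (v j) = fun i => PowerSeries.C (w j) * v j i)) ∧
    (∃ P : Matrix (Fin n) (Fin n) (PowerSeries ℂ),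
      IsUnit P ∧ coeffM 0 P = 1 ∧
      -- `P⁻¹AP + u²P⁻¹(dP/du) = A_0`, equivalently `A·P + u²·dP/du = P·A_0`
      A * P + (PowerSeries.X ^ 2 : PowerSeries ℂ) • matD P =
        P * (Matrix.diagonal w).map (PowerSeries.C (R := ℂ))) := by
  choose v hv0 hflat using exists_flat_section A w h0 h1
  have hP0 : coeffM 0 (of fun i j => v j i) = 1 := by
    ext i j
    rw [one_apply, ← Pi.single_apply, ← hv0 j, piConst, ← coeff_zero_eq_constantCoeff_apply]
    rfl
  exact ⟨⟨v, hv0, hflat⟩, of fun i j => v j i, isUnit_of_coeffM_zero_eq_one hP0, hP0,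
    gauge_eq_of_flat_columns hflat⟩

end
end

section
/- For a finite list of integers b = (b_1, …, b_r), define ζ(b) = 1 + ∑_{i=1}^{r} i·b_i. Let k = k_1 + k_2 + k_3 + k_4 + k_5 with k_1, …, k_5 ≥ 0, let a_1, …, a_k ∈ ℤ, and for s = 1, …, 5 let block s denote the sublist of consecutive entries (a_{k_1+⋯+k_{s−1}+1}, …, a_{k_1+⋯+k_s}) with sum ε_s. Let g_2, g_3 ∈ ℤ, and set q_2 = ε_2 + g_2 + 1 and q_4 = ε_4 + g_3 + 1. Then ζ(block 2) + ζ(block 4) + ζ(block 1 ⧺ (q_2) ⧺ block 3 ⧺ (q_4) ⧺ block 5) ≡ ζ(a) + ε_2 + ε_3 + k_3 + g_2·(k_1 + 1) + g_3·(k_1 + k_3) + 1 + k_2·(ε_3 + ε_4 + ε_5) + k_4·ε_5 (mod 2), where ⧺ denotes concatenation of lists and (q) denotes a one-element list. (Sign identity for the ζ-signs appearing in the structure equation of the horocyclic q-operations: a_i plays the role of the reduced degree |α_i|′ and g_2, g_3 the roles of |γ^{J_2}|, |γ^{J_3}|, so that q_2 and q_4 are the reduced degrees of the outputs of the inner q-operations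 by the degree property.) -/
/-!
`ζ` is one plus the index-weighted sum `W(b) = ∑ i·b_i`, and `W` of a concatenation is
`W(l ++ m) = W(l) + W(m) + |l|·∑ m`. Expanding both sides this way writes them as polynomials
in the block lengths, block sums, block weighted sums and `g₂, g₃`, and their difference is
exactly twice an integer polynomial, which is the witness of the congruence.
-/

open Finset

/-- `ζ(b_1, …, b_r) = 1 + ∑_{i=1}^r i·b_i`. -/
def zetaL (l : List ℤ) : ℤ :=
  1 + ∑ i : Fin l.length, ((i : ℕ) + 1 : ℤ) * l.get i

namespace List

variable {R : Type*} [CommSemiring R]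

def weightedSum (l : List R) : R :=
  ∑ i : Fin l.length, ((i : ℕ) + 1 : R) * l.get i

@[simp]
theorem weightedSum_nil : weightedSum ([] : List R) = 0 := rfl

theorem weightedSum_cons (a : R) (l : List R) :
    weightedSum (a :: l) = a + weightedSum l + l.sum := by
  simp only [weightedSum, length_cons, Fin.sum_univ_succ, Fin.val_zero, Nat.cast_zero, one_mul,
    Fin.val_succ, Nat.cast_add, Nat.cast_one, add_mul, sum_add_distrib, get_eq_getElem,
    getElem_cons_zero, getElem_cons_succ, Fin.sum_univ_getElem]
  ring

theorem weightedSum_append (l m : List R) :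
    weightedSum (l ++ m) = weightedSum l + weightedSum m + l.length * m.sum := by
  induction l with
  | nil => simp
  | cons a t ih =>
    simp only [cons_append, weightedSum_cons, ih, sum_append, length_cons, Nat.cast_succ]
    ring

@[simp]
theorem weightedSum_singleton (x : R) : weightedSum [x] = x := by
  simp [weightedSum]

end List

theorem zetaL_eq_one_add_weightedSum (l : List ℤ) : zetaL l = 1 + l.weightedSum := rfl

/-- Sign identity for the ζ-signs in the structure equation for the horocyclic
q-operations. -/
theorem zeta_sign_identity (b1 b2 b3 b4 b5 : List ℤ) (g2 g3 : ℤ) :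
    Int.ModEq 2
      (zetaL b2 + zetaL b4 +
        zetaL (b1 ++ [b2.sum + g2 + 1] ++ b3 ++ [b4.sum + g3 + 1] ++ b5))
      (zetaL (b1 ++ b2 ++ b3 ++ b4 ++ b5) + b2.sum + b3.sum + (b3.length : ℤ) +
        g2 * ((b1.length : ℤ) + 1) + g3 * ((b1.length : ℤ) + (b3.length : ℤ)) + 1 +
        (b2.length : ℤ) * (b3.sum + b4.sum + b5.sum) + (b4.length : ℤ) * b5.sum) := by
  rw [Int.modEq_iff_dvd]
  refine ⟨b2.length * (b3.sum + b4.sum + b5.sum) + b4.length * b5.sum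
    - (b1.length + b4.sum + b5.sum + g3 + 2), ?_⟩
  simp only [zetaL_eq_one_add_weightedSum, List.weightedSum_append, List.weightedSum_singleton,
    List.sum_singleton, List.length_append, List.length_singleton, Nat.cast_add,
    Nat.cast_one]
  ring
end
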